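/- For every nonnegative integer n, the number of tilings of the Aztec diamond of order n by horizontal skew tetrominos and horizontal straight tetrominos is a perfect square. -/

import Mathlib

/-!
No tile crosses the midline `y = 0` of the Aztec diamond, so a tiling is a pair of tilings of
the upper and lower halves; the reflection `(i, j) ↦ (i, -1 - j)` exchanges the halves and
preserves the tile set, so the count is the square of the number of tilings of the upper half.

Every horizontal skew or straight tetromino is a disjoint union of two horizontal dominoes, so
in any row the cells of a tile lying left of a cell outside it are even in number. Rows `0`
and `-1` of the diamond of order `n` consist of the columns `-n, …, n - 1`; hence if a tile has
its leftmost cell of such a row in column `x`, the `x + n` cells to its left are covered by the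
other tiles and `x + n` is even. A skew tetromino crossing the midline would have its leftmost
cells in rows `0` and `-1` in adjacent columns.
-/

/-- Translate a set of cells by a vector `v`. -/
def cellTranslate (v : ℤ × ℤ) (s : Finset (ℤ × ℤ)) : Finset (ℤ × ℤ) :=
  s.image (fun p => (p.1 + v.1, p.2 + v.2))

/-- The Aztec diamond of order `n`: cells `(i,j)` with `|2i+1| + |2j+1| ≤ 2n`. -/
noncomputable def aztec (n : ℕ) : Finset (ℤ × ℤ) :=
  (Finset.Icc (-(n : ℤ)) (n : ℤ) ×ˢ Finset.Icc (-(n : ℤ)) (n : ℤ)).filter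
    (fun p => |2 * p.1 + 1| + |2 * p.2 + 1| ≤ 2 * (n : ℤ))

def IsHorizDomino (t : Finset (ℤ × ℤ)) : Prop :=
  ∃ v, t = cellTranslate v ({(0,0), (1,0)} : Finset (ℤ × ℤ))

def IsDomino (t : Finset (ℤ × ℤ)) : Prop :=
  ∃ v, t = cellTranslate v ({(0,0), (1,0)} : Finset (ℤ × ℤ)) ∨
       t = cellTranslate v ({(0,0), (0,1)} : Finset (ℤ × ℤ))

def IsStraightTetromino (t : Finset (ℤ × ℤ)) : Prop :=
  ∃ v, t = cellTranslate v ({(0,0), (1,0), (2,0), (3,0)} : Finset (ℤ × ℤ)) ∨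
       t = cellTranslate v ({(0,0), (0,1), (0,2), (0,3)} : Finset (ℤ × ℤ))

def IsHorizStraightTetromino (t : Finset (ℤ × ℤ)) : Prop :=
  ∃ v, t = cellTranslate v ({(0,0), (1,0), (2,0), (3,0)} : Finset (ℤ × ℤ))

def IsSkewTetromino (t : Finset (ℤ × ℤ)) : Prop :=
  ∃ v, t = cellTranslate v ({(0,0), (1,0), (1,1), (2,1)} : Finset (ℤ × ℤ)) ∨
       t = cellTranslate v ({(0,1), (1,1), (1,0), (2,0)} : Finset (ℤ × ℤ)) ∨
       t = cellTranslate v ({(0,0), (0,1), (1,1), (1,2)} : Finset (ℤ × ℤ)) ∨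
       t = cellTranslate v ({(1,0), (1,1), (0,1), (0,2)} : Finset (ℤ × ℤ))

def IsHorizSkewTetromino (t : Finset (ℤ × ℤ)) : Prop :=
  ∃ v, t = cellTranslate v ({(0,0), (1,0), (1,1), (2,1)} : Finset (ℤ × ℤ)) ∨
       t = cellTranslate v ({(0,1), (1,1), (1,0), (2,0)} : Finset (ℤ × ℤ))

def IsSquareTetromino (t : Finset (ℤ × ℤ)) : Prop :=
  ∃ v, t = cellTranslate v ({(0,0), (1,0), (0,1), (1,1)} : Finset (ℤ × ℤ))

/-- `T` is a tiling of the finite region `R` where every tile satisfies `P`: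
the tiles satisfy `P`, are pairwise disjoint, and their union is `R`. -/
def IsTiling (R : Finset (ℤ × ℤ)) (P : Finset (ℤ × ℤ) → Prop)
    (T : Finset (Finset (ℤ × ℤ))) : Prop :=
  (∀ t ∈ T, P t) ∧ (T : Set (Finset (ℤ × ℤ))).PairwiseDisjoint id ∧
    T.biUnion id = R

/-- The finset of all tilings of `R` by tiles satisfying `P`.
(Every tiling of `R` consists of subsets of `R`, hence lies in `R.powerset.powerset`.) -/
noncomputable def tilings (R : Finset (ℤ × ℤ)) (P : Finset (ℤ × ℤ) → Prop) :
    Finset (Finset (Finset (ℤ × ℤ))) :=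
  @Finset.filter _ (fun T => IsTiling R P T) (Classical.decPred _) R.powerset.powerset

section Tilings

variable {R A B : Finset (ℤ × ℤ)} {P : Finset (ℤ × ℤ) → Prop}
  {T T₁ T₂ : Finset (Finset (ℤ × ℤ))} {t : Finset (ℤ × ℤ)}

theorem IsTiling.subset (hT : IsTiling R P T) (ht : t ∈ T) : t ⊆ R :=
  hT.2.2 ▸ Finset.subset_biUnion_of_mem id ht

theorem mem_tilings : T ∈ tilings R P ↔ IsTiling R P T := by
  simp only [tilings, Finset.mem_filter, Finset.mem_powerset, and_iff_right_iff_imp]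
  exact fun hT t ht => Finset.mem_powerset.2 (hT.subset ht)

theorem IsTiling.union (h₁ : IsTiling A P T₁) (h₂ : IsTiling B P T₂) (hAB : Disjoint A B) :
    IsTiling (A ∪ B) P (T₁ ∪ T₂) := by
  refine ⟨fun t ht => (Finset.mem_union.1 ht).elim (h₁.1 t) (h₂.1 t), ?_, ?_⟩
  · rw [Finset.coe_union, Set.pairwiseDisjoint_union]
    exact ⟨h₁.2.1, h₂.2.1, fun t₁ ht₁ t₂ ht₂ _ =>
      hAB.mono (h₁.subset ht₁) (h₂.subset ht₂)⟩
  · rw [Finset.union_biUnion, h₁.2.2, h₂.2.2]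

theorem IsTiling.filter (hT : IsTiling R P T) (Q : ℤ × ℤ → Prop) [DecidablePred Q]
    (hQ : ∀ t ∈ T, (∀ p ∈ t, Q p) ∨ ∀ p ∈ t, ¬Q p) :
    IsTiling (R.filter Q) P (T.filter fun t => ∀ p ∈ t, Q p) := by
  refine ⟨fun t ht => hT.1 t (Finset.mem_filter.1 ht).1,
    hT.2.1.subset (Finset.filter_subset _ _), ?_⟩
  ext p
  simp only [Finset.mem_biUnion, Finset.mem_filter, id_eq]
  constructor
  · rintro ⟨t, ⟨ht, hQt⟩, hp⟩
    exact ⟨hT.subset ht hp, hQt p hp⟩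
  · rintro ⟨hp, hQp⟩
    obtain ⟨t, ht, hpt⟩ := Finset.mem_biUnion.1 (hT.2.2 ▸ hp)
    exact ⟨t, ⟨ht, (hQ t ht).resolve_right fun h => h p hpt hQp⟩, hpt⟩

theorem IsTiling.filter_forall_eq_self (hT : IsTiling R P T) {Q : ℤ × ℤ → Prop}
    [DecidablePred Q] (hQ : ∀ p ∈ R, Q p) : T.filter (fun t => ∀ p ∈ t, Q p) = T :=
  Finset.filter_true_of_mem fun _ ht p hp => hQ p (hT.subset ht hp)

theorem IsTiling.filter_forall_eq_empty (hT : IsTiling R P T) (hne : ∀ t, P t → t.Nonempty)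
    {Q : ℤ × ℤ → Prop} [DecidablePred Q] (hQ : ∀ p ∈ R, ¬Q p) :
    T.filter (fun t => ∀ p ∈ t, Q p) = ∅ :=
  Finset.filter_false_of_mem fun t ht hQt =>
    let ⟨p, hp⟩ := hne t (hT.1 t ht)
    hQ p (hT.subset ht hp) (hQt p hp)

theorem card_tilings_eq_mul (Q : ℤ × ℤ → Prop) [DecidablePred Q]
    (hne : ∀ t, P t → t.Nonempty)
    (hQ : ∀ T, IsTiling R P T → ∀ t ∈ T, (∀ p ∈ t, Q p) ∨ ∀ p ∈ t, ¬Q p) :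
    (tilings R P).card =
      (tilings (R.filter Q) P).card * (tilings (R.filter fun p => ¬Q p) P).card := by
  have hnQ :
      ∀ T, IsTiling R P T → ∀ t ∈ T, (∀ p ∈ t, ¬Q p) ∨ ∀ p ∈ t, ¬¬Q p := by
    simpa only [not_not, or_comm] using hQ
  rw [← Finset.card_product]
  refine Finset.card_nbij' (fun T => (T.filter fun t => ∀ p ∈ t, Q p,
      T.filter fun t => ∀ p ∈ t, ¬Q p)) (fun T => T.1 ∪ T.2) ?_ ?_ ?_ ?_
  · intro T hT
    rw [Finset.mem_coe, mem_tilings] at hT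
    exact Finset.mem_product.2 ⟨mem_tilings.2 (hT.filter Q (hQ T hT)),
      mem_tilings.2 (hT.filter _ (hnQ T hT))⟩
  · rintro ⟨T₁, T₂⟩ hT
    obtain ⟨h₁, h₂⟩ := Finset.mem_product.1 hT
    rw [Finset.mem_coe, mem_tilings, ← Finset.filter_union_filter_not_eq Q R]
    exact (mem_tilings.1 h₁).union (mem_tilings.1 h₂)
      (Finset.disjoint_filter_filter_not _ _ _)
  · intro T hT
    rw [Finset.mem_coe, mem_tilings] at hT
    change T.filter _ ∪ T.filter _ = T
    rw [← Finset.filter_or, Finset.filter_true_of_mem fun t ht => hQ T hT t ht]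
  · rintro ⟨T₁, T₂⟩ hT
    obtain ⟨h₁, h₂⟩ := Finset.mem_product.1 hT
    rw [mem_tilings] at h₁ h₂
    have hR₁ : ∀ p ∈ R.filter Q, Q p := fun p hp => (Finset.mem_filter.1 hp).2
    have hR₂ : ∀ p ∈ R.filter (fun p => ¬Q p), ¬Q p := fun p hp =>
      (Finset.mem_filter.1 hp).2
    simp only [Finset.filter_union, Prod.mk.injEq]
    rw [h₁.filter_forall_eq_self hR₁, h₂.filter_forall_eq_empty hne hR₂,
      h₁.filter_forall_eq_empty hne fun p hp h => h (hR₁ p hp),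
      h₂.filter_forall_eq_self hR₂,
      Finset.union_empty, Finset.empty_union]
    exact ⟨rfl, rfl⟩

theorem IsTiling.map (hT : IsTiling R P T) (e : ℤ × ℤ ≃ ℤ × ℤ)
    (hP : ∀ t, P t → P (t.map e.toEmbedding)) :
    IsTiling (R.map e.toEmbedding) P (T.map e.finsetCongr.toEmbedding) := by
  refine ⟨?_, ?_, ?_⟩
  · simp only [Finset.mem_map, Equiv.coe_toEmbedding, Equiv.finsetCongr_apply]
    rintro _ ⟨t, ht, rfl⟩
    exact hP t (hT.1 t ht)
  · rw [Finset.coe_map]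
    rintro _ ⟨t₁, ht₁, rfl⟩ _ ⟨t₂, ht₂, rfl⟩ hne
    change Disjoint (t₁.map _) (t₂.map _)
    rw [Finset.disjoint_map]
    exact hT.2.1 ht₁ ht₂ fun h => hne (h ▸ rfl)
  · ext p
    simp only [← hT.2.2, Finset.mem_biUnion, Finset.mem_map_equiv, Equiv.finsetCongr_symm,
      Equiv.finsetCongr_apply, id_eq]
    constructor
    · rintro ⟨t, ht, hp⟩
      exact ⟨_, ht, Finset.mem_map_of_mem _ hp⟩
    · rintro ⟨t, ht, hp⟩
      exact ⟨t.map e.toEmbedding, by simpa [Finset.map_map] using ht,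
        Finset.mem_map_equiv.2 hp⟩

theorem card_tilings_map (e : ℤ × ℤ ≃ ℤ × ℤ)
    (hP : ∀ t, P (t.map e.toEmbedding) ↔ P t) :
    (tilings (R.map e.toEmbedding) P).card = (tilings R P).card := by
  have hP' : ∀ t, P t → P (t.map e.symm.toEmbedding) := fun t ht => by
    rw [← hP, Finset.map_map]
    simpa using ht
  set E := e.finsetCongr.finsetCongr
  refine Finset.card_nbij' E.symm E ?_ ?_ (fun T _ => E.apply_symm_apply T)
    (fun T _ => E.symm_apply_apply T)
  · intro T hT
    rw [Finset.mem_coe, mem_tilings] at hT ⊢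
    simpa [E, Finset.map_map] using hT.map e.symm hP'
  · intro T hT
    rw [Finset.mem_coe, mem_tilings] at hT ⊢
    exact hT.map e fun t => (hP t).2

end Tilings

theorem mem_cellTranslate {v p : ℤ × ℤ} {s : Finset (ℤ × ℤ)} :
    p ∈ cellTranslate v s ↔ (p.1 - v.1, p.2 - v.2) ∈ s := by
  simp only [cellTranslate, Finset.mem_image]
  constructor
  · rintro ⟨q, hq, rfl⟩
    simpa using hq
  · exact fun h => ⟨_, h, by simp⟩

def rowLeft (j x : ℤ) (s : Finset (ℤ × ℤ)) : Finset (ℤ × ℤ) :=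
  s.filter fun p => p.2 = j ∧ p.1 < x

theorem IsHorizDomino.even_card_rowLeft {d : Finset (ℤ × ℤ)} (hd : IsHorizDomino d)
    {x j : ℤ} (hxj : (x, j) ∉ d) : Even (rowLeft j x d).card := by
  obtain ⟨⟨a, b⟩, rfl⟩ := hd
  simp only [mem_cellTranslate, Finset.mem_insert, Finset.mem_singleton, Prod.ext_iff] at hxj
  have hrow : ∀ p ∈ cellTranslate (a, b) {(0, 0), (1, 0)},
      (p.2 = j ∧ p.1 < x ↔ j = b ∧ a < x) := by
    rintro ⟨y, z⟩ hp
    simp only [mem_cellTranslate, Finset.mem_insert, Finset.mem_singleton, Prod.ext_iff] at hp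
    omega
  by_cases h : j = b ∧ a < x
  · rw [rowLeft, Finset.filter_true_of_mem fun p hp => (hrow p hp).2 h]
    simp [cellTranslate]
  · rw [rowLeft, Finset.filter_false_of_mem fun p hp => h ∘ (hrow p hp).1]
    simp

def IsHorizSkewOrStraight (t : Finset (ℤ × ℤ)) : Prop :=
  IsHorizSkewTetromino t ∨ IsHorizStraightTetromino t

namespace IsHorizSkewOrStraight

variable {t : Finset (ℤ × ℤ)}

theorem exists_eq_union_horizDomino (ht : IsHorizSkewOrStraight t) :
    ∃ d₁ d₂, IsHorizDomino d₁ ∧ IsHorizDomino d₂ ∧ Disjoint d₁ d₂ ∧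
      t = d₁ ∪ d₂ := by
  obtain ⟨⟨a, b⟩, rfl | rfl⟩ | ⟨⟨a, b⟩, rfl⟩ := ht <;>
    [refine ⟨_, _, ⟨(a, b), rfl⟩, ⟨(a + 1, b + 1), rfl⟩, ?_, ?_⟩;
     refine ⟨_, _, ⟨(a, b + 1), rfl⟩, ⟨(a + 1, b), rfl⟩, ?_, ?_⟩;
     refine ⟨_, _, ⟨(a, b), rfl⟩, ⟨(a + 2, b), rfl⟩, ?_, ?_⟩]
  all_goals
    first | rw [Finset.disjoint_left] | rw [Finset.ext_iff]
    rintro ⟨x, y⟩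
    simp only [mem_cellTranslate, Finset.mem_union, Finset.mem_insert, Finset.mem_singleton,
      Prod.ext_iff]
    omega

theorem nonempty (ht : IsHorizSkewOrStraight t) : t.Nonempty := by
  obtain ⟨d₁, d₂, ⟨v, rfl⟩, -, -, rfl⟩ := ht.exists_eq_union_horizDomino
  exact ⟨v, Finset.mem_union_left _ (mem_cellTranslate.2 (by simp))⟩

theorem even_card_rowLeft (ht : IsHorizSkewOrStraight t) {x j : ℤ} (hxj : (x, j) ∉ t) :
    Even (rowLeft j x t).card := by
  obtain ⟨d₁, d₂, hd₁, hd₂, hd, rfl⟩ := ht.exists_eq_union_horizDomino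
  rw [Finset.notMem_union] at hxj
  rw [rowLeft, Finset.filter_union, Finset.card_union_of_disjoint
    (Finset.disjoint_filter_filter hd)]
  exact (hd₁.even_card_rowLeft hxj.1).add (hd₂.even_card_rowLeft hxj.2)

end IsHorizSkewOrStraight

theorem IsTiling.even_card_rowLeft_iff {R : Finset (ℤ × ℤ)} {P : Finset (ℤ × ℤ) → Prop}
    {T : Finset (Finset (ℤ × ℤ))} {t : Finset (ℤ × ℤ)} (hT : IsTiling R P T)
    (hP : ∀ t, P t → ∀ x j, (x, j) ∉ t → Even (rowLeft j x t).card)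
    (ht : t ∈ T) {x j : ℤ} (hxj : (x, j) ∈ t) :
    Even (rowLeft j x R).card ↔ Even (rowLeft j x t).card := by
  have hsum : (rowLeft j x R).card = ∑ u ∈ T, (rowLeft j x u).card := by
    rw [rowLeft, ← hT.2.2, Finset.filter_biUnion, Finset.card_biUnion]
    · rfl
    · exact fun u hu v hv huv => Finset.disjoint_filter_filter (hT.2.1 hu hv huv)
  have hrest : Even (∑ u ∈ T.erase t, (rowLeft j x u).card) := by
    refine Finset.even_sum _ fun u hu => hP u (hT.1 u (Finset.mem_of_mem_erase hu)) x j ?_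
    exact fun hxu => Finset.disjoint_left.1
      (hT.2.1 (Finset.mem_of_mem_erase hu) ht (Finset.ne_of_mem_erase hu)) hxu hxj
  rw [hsum, ← Finset.add_sum_erase _ _ ht, Nat.even_add, iff_true_right hrest]

theorem mem_aztec {n : ℕ} {p : ℤ × ℤ} :
    p ∈ aztec n ↔ |2 * p.1 + 1| + |2 * p.2 + 1| ≤ 2 * n := by
  simp only [aztec, Finset.mem_filter, Finset.mem_product, Finset.mem_Icc, and_iff_right_iff_imp]
  intro h
  have h₁ := abs_le.1 (le_refl |2 * p.1 + 1|)
  have h₂ := abs_le.1 (le_refl |2 * p.2 + 1|)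
  omega

theorem mk_mem_aztec_iff {n : ℕ} {i j : ℤ} (hj : j = 0 ∨ j = -1) :
    (i, j) ∈ aztec n ↔ -n ≤ i ∧ i < n := by
  have hj' : |2 * j + 1| = 1 := by rcases hj with rfl | rfl <;> rfl
  rw [mem_aztec, hj', ← le_sub_iff_add_le, abs_le]
  constructor <;> omega

theorem card_rowLeft_aztec {n : ℕ} {x j : ℤ} (hj : j = 0 ∨ j = -1) (hx : -n ≤ x)
    (hx' : x ≤ n) :
    ((rowLeft j x (aztec n)).card : ℤ) = x + n := by
  have : rowLeft j x (aztec n) = (Finset.Ico (-n : ℤ) x).image fun i => (i, j) := by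
    ext ⟨y, z⟩
    simp only [rowLeft, Finset.mem_filter, Finset.mem_image, Finset.mem_Ico, Prod.ext_iff]
    constructor
    · rintro ⟨hp, rfl, hyx⟩
      exact ⟨y, ⟨((mk_mem_aztec_iff hj).1 hp).1, hyx⟩, rfl, rfl⟩
    · rintro ⟨i, ⟨hi, hix⟩, rfl, rfl⟩
      exact ⟨(mk_mem_aztec_iff hj).2 ⟨hi, by omega⟩, rfl, hix⟩
  rw [this, Finset.card_image_of_injective _ fun a b h => (Prod.ext_iff.1 h).1, Int.card_Ico]
  omega

section AztecTilings

variable {n : ℕ} {T : Finset (Finset (ℤ × ℤ))} {t : Finset (ℤ × ℤ)}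

theorem IsTiling.even_of_leftmost_on_midline (hT : IsTiling (aztec n) IsHorizSkewOrStraight T)
    (ht : t ∈ T) {x j : ℤ} (hj : j = 0 ∨ j = -1) (hxj : (x, j) ∈ t)
    (hleft : ∀ y, (y, j) ∈ t → x ≤ y) : Even (x + n) := by
  obtain ⟨hx, hx'⟩ := (mk_mem_aztec_iff hj).1 (hT.subset ht hxj)
  have hempty : rowLeft j x t = ∅ :=
    Finset.filter_false_of_mem fun p hp h => (hleft p.1 (h.1 ▸ hp)).not_gt h.2
  have heven := (hT.even_card_rowLeft_iff (fun _ h _ _ => h.even_card_rowLeft) ht hxj).2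
    (by simp [hempty])
  rw [← card_rowLeft_aztec hj hx hx'.le]
  exact (Int.even_coe_nat _).2 heven

theorem IsTiling.not_crosses_midline (hT : IsTiling (aztec n) IsHorizSkewOrStraight T)
    (ht : t ∈ T) : (∀ p ∈ t, 0 ≤ p.2) ∨ ∀ p ∈ t, ¬0 ≤ p.2 := by
  by_contra! h
  obtain ⟨⟨⟨x, y⟩, hp, hy⟩, ⟨x', y'⟩, hp', hy'⟩ := h
  obtain ⟨⟨a, b⟩, rfl | rfl⟩ | ⟨⟨a, b⟩, rfl⟩ := hT.1 t ht <;>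
    simp only [mem_cellTranslate, Finset.mem_insert, Finset.mem_singleton, Prod.ext_iff]
      at hp hp'
  · obtain rfl : b = -1 := by omega
    have h₁ := hT.even_of_leftmost_on_midline ht (x := a) (j := -1) (by simp)
      (by simp [mem_cellTranslate]) fun y hy => by
      simp only [mem_cellTranslate, Finset.mem_insert, Finset.mem_singleton, Prod.ext_iff]
        at hy
      omega
    have h₂ := hT.even_of_leftmost_on_midline ht (x := a + 1) (j := 0) (by simp)
      (by simp [mem_cellTranslate]) fun y hy => by
      simp only [mem_cellTranslate, Finset.mem_insert, Finset.mem_singleton, Prod.ext_iff]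
        at hy
      omega
    rw [add_right_comm, Int.even_add_one] at h₂
    exact h₂ h₁
  · obtain rfl : b = -1 := by omega
    have h₁ := hT.even_of_leftmost_on_midline ht (x := a) (j := 0) (by simp)
      (by simp [mem_cellTranslate]) fun y hy => by
      simp only [mem_cellTranslate, Finset.mem_insert, Finset.mem_singleton, Prod.ext_iff]
        at hy
      omega
    have h₂ := hT.even_of_leftmost_on_midline ht (x := a + 1) (j := -1) (by simp)
      (by simp [mem_cellTranslate]) fun y hy => by
      simp only [mem_cellTranslate, Finset.mem_insert, Finset.mem_singleton, Prod.ext_iff]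
        at hy
      omega
    rw [add_right_comm, Int.even_add_one] at h₂
    exact h₂ h₁
  · omega

end AztecTilings

@[simps]
def midlineReflection : Equiv.Perm (ℤ × ℤ) where
  toFun p := (p.1, -1 - p.2)
  invFun p := (p.1, -1 - p.2)
  left_inv p := by simp
  right_inv p := by simp

theorem IsHorizSkewOrStraight.map_midlineReflection {t : Finset (ℤ × ℤ)}
    (ht : IsHorizSkewOrStraight t) :
    IsHorizSkewOrStraight (t.map midlineReflection.toEmbedding) := by
  obtain ⟨⟨a, b⟩, rfl | rfl⟩ | ⟨⟨a, b⟩, rfl⟩ := ht <;>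
    [refine Or.inl ⟨(a, -2 - b), Or.inr ?_⟩;
     refine Or.inl ⟨(a, -2 - b), Or.inl ?_⟩;
     refine Or.inr ⟨(a, -1 - b), ?_⟩]
  all_goals
    ext ⟨x, y⟩
    simp only [Finset.mem_map_equiv, midlineReflection_symm_apply, mem_cellTranslate,
      Finset.mem_insert, Finset.mem_singleton, Prod.ext_iff]
    omega

theorem isHorizSkewOrStraight_map_midlineReflection_iff {t : Finset (ℤ × ℤ)} :
    IsHorizSkewOrStraight (t.map midlineReflection.toEmbedding) ↔ IsHorizSkewOrStraight t := by
  refine ⟨fun ht => ?_, IsHorizSkewOrStraight.map_midlineReflection⟩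
  have hinv : (t.map midlineReflection.toEmbedding).map midlineReflection.toEmbedding = t := by
    ext p
    simp [Finset.mem_map_equiv]
  simpa only [hinv] using ht.map_midlineReflection

theorem map_midlineReflection_aztec_upper (n : ℕ) :
    ((aztec n).filter fun p => 0 ≤ p.2).map midlineReflection.toEmbedding =
      (aztec n).filter fun p => ¬0 ≤ p.2 := by
  ext ⟨x, y⟩
  simp only [Finset.mem_map_equiv, Finset.mem_filter, mem_aztec, midlineReflection_symm_apply]
  rw [show 2 * (-1 - y) + 1 = -(2 * y + 1) by ring, abs_neg]
  omega

/-- The number of tilings of the Aztec diamond of order `n` by horizontal skew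
tetrominos and horizontal straight tetrominos is a perfect square. -/
theorem aztec_hskew_hstraight_count_is_square (n : ℕ) :
    ∃ k : ℕ,
      (tilings (aztec n)
        (fun t => IsHorizSkewTetromino t ∨ IsHorizStraightTetromino t)).card
        = k ^ 2 := by
  change ∃ k : ℕ, (tilings (aztec n) IsHorizSkewOrStraight).card = k ^ 2
  rw [card_tilings_eq_mul (fun p => 0 ≤ p.2) (fun _ ht => ht.nonempty)
    fun _ hT _ ht => hT.not_crosses_midline ht, ← map_midlineReflection_aztec_upper,
    card_tilings_map _ fun _ => isHorizSkewOrStraight_map_midlineReflection_iff]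
  exact ⟨_, (sq _).symm⟩
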